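/- In the three-qubit space EuclideanSpace ℂ (Fin 3 → Fin 2) there exist three pairwise orthogonal subspaces G₁, G₂, G₃ with finrank G₁ = 2, finrank G₂ = 3, finrank G₃ = 3, such that every nonzero vector of each Gᵢ is genuinely multipartite entangled and G₁ ⊔ G₂ ⊔ G₃ = ⊤; i.e., the three-qubit Hilbert space decomposes into three mutually orthogonal genuinely entangled subspaces of dimensions 2, 3 and 3. -/

import Mathlib

/-- `ψ` is biseparable across the bipartition `(S, Sᶜ)` of the three qubits. -/
def Biseparable (S : Set (Fin 3))
    (ψ : EuclideanSpace ℂ (Fin 3 → Fin 2)) : Prop :=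
  ∃ (φ : ((j : S) → Fin 2) → ℂ) (χ : ((j : ↥Sᶜ) → Fin 2) → ℂ),
    ∀ i, ψ i = φ (fun j => i j.val) * χ (fun j => i j.val)

/-- A nonzero vector is genuinely multipartite entangled if it is not biseparable
across any nontrivial bipartition. -/
def GME (ψ : EuclideanSpace ℂ (Fin 3 → Fin 2)) : Prop :=
  ψ ≠ 0 ∧ ∀ S : Set (Fin 3), S ≠ ∅ → S ≠ Set.univ → ¬ Biseparable S ψ

/-!
A vector biseparable across a nontrivial cut of three qubits has one qubit `k` that splits off,
so every 2 × 2 minor of its 2 × 4 flattening along `k` vanishes. We take an explicit orthogonal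
basis `w 0, …, w 7` with entries in `{-1, 0, 1}` (Gram matrix `6 • 1`) and group it into blocks
of sizes 2, 3, 3. Orthogonality gives the orthogonal decomposition with the right dimensions,
and for each block and each `k` the vanishing minors, read as quadratic equations in the
coefficients of a vector of the block, force all coefficients to be zero.
-/

open Function InnerProductSpace Submodule Module

theorem isOrtho_span_image_of_disjoint {𝕜 E ι : Type*} [RCLike 𝕜] [NormedAddCommGroup E]
    [InnerProductSpace 𝕜 E] {v : ι → E} (hv : Pairwise fun i j => ⟪v i, v j⟫_𝕜 = 0)
    {s t : Set ι} (hst : Disjoint s t) : span 𝕜 (v '' s) ⟂ span 𝕜 (v '' t) := by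
  rw [isOrtho_span]
  rintro _ ⟨i, hi, rfl⟩ _ ⟨j, hj, rfl⟩
  exact hv (hst.ne_of_mem hi hj)

theorem LinearIndependent.finrank_span_image_finset {K V ι : Type*} [DivisionRing K]
    [AddCommGroup V] [Module K V] {v : ι → V} (hv : LinearIndependent K v) (s : Finset ι) :
    finrank K (span K (v '' s)) = s.card := by
  rw [Set.image_eq_range]
  exact (finrank_span_eq_card (hv.comp _ Subtype.val_injective)).trans (by simp)

theorem Fin.exists_eq_singleton_or_compl_eq_singleton (S : Set (Fin 3)) (h₁ : S ≠ ∅)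
    (h₂ : S ≠ Set.univ) : ∃ k, S = {k} ∨ Sᶜ = {k} := by
  lift S to Finset (Fin 3) using S.toFinite
  norm_cast at h₁ h₂ ⊢
  revert S
  decide

/-- `f`, as a matrix with rows indexed by coordinate `k` and columns by the other coordinates,
has rank at most one. -/
def SplitsOff {ι α R : Type*} [DecidableEq ι] [Mul R] (k : ι) (f : (ι → α) → R) : Prop :=
  ∀ i j, f i * f j = f (update i k (j k)) * f (update j k (i k))

section Biseparable

variable {S : Set (Fin 3)} {ψ : EuclideanSpace ℂ (Fin 3 → Fin 2)}

theorem Biseparable.mul_eq_mul_piecewise [DecidablePred (· ∈ S)] (h : Biseparable S ψ)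
    (i j : Fin 3 → Fin 2) : ψ i * ψ j = ψ (S.piecewise i j) * ψ (S.piecewise j i) := by
  obtain ⟨φ, χ, hψ⟩ := h
  have hS (x : S) : (x : Fin 3) ∈ S := x.2
  have hSc (x : ↥Sᶜ) : (x : Fin 3) ∉ S := x.2
  simp only [hψ, Set.piecewise_eq_of_mem _ _ _ (hS _), Set.piecewise_eq_of_notMem _ _ _ (hSc _)]
  ring

theorem Biseparable.exists_splitsOff (h : Biseparable S ψ) (h₁ : S ≠ ∅) (h₂ : S ≠ Set.univ) :
    ∃ k, SplitsOff k ⇑ψ := by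
  classical
  obtain ⟨k, rfl | hk⟩ := Fin.exists_eq_singleton_or_compl_eq_singleton S h₁ h₂
  · refine ⟨k, fun i j => ?_⟩
    rw [h.mul_eq_mul_piecewise, Set.piecewise_singleton, Set.piecewise_singleton, mul_comm]
  · refine ⟨k, fun i j => ?_⟩
    rw [h.mul_eq_mul_piecewise, ← compl_compl S, hk, Set.piecewise_compl, Set.piecewise_compl,
      Set.piecewise_singleton, Set.piecewise_singleton]

end Biseparable

namespace ThreeQubitGES

def amp : Fin 8 → Fin 2 → Fin 2 → Fin 2 → ℤ :=
  ![![![![-1, -1], ![-1, 1]], ![![0, 1], ![0, 1]]],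
    ![![![0, -1], ![-1, 0]], ![![1, -1], ![1, -1]]],
    ![![![-1, 1], ![-1, -1]], ![![1, 0], ![-1, 0]]],
    ![![![-1, 0], ![0, 1]], ![![-1, -1], ![-1, -1]]],
    ![![![0, -1], ![1, 0]], ![![1, -1], ![-1, 1]]],
    ![![![-1, -1], ![1, -1]], ![![0, 1], ![0, -1]]],
    ![![![-1, 1], ![1, 1]], ![![1, 0], ![1, 0]]],
    ![![![1, 0], ![0, 1]], ![![1, 1], ![-1, -1]]]]

def w (n : Fin 8) : EuclideanSpace ℂ (Fin 3 → Fin 2) :=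
  WithLp.toLp 2 fun i => amp n (i 0) (i 1) (i 2)

theorem amp_gram (m n : Fin 8) :
    ∑ i : Fin 3 → Fin 2, amp m (i 0) (i 1) (i 2) * amp n (i 0) (i 1) (i 2) =
      if m = n then 6 else 0 := by
  revert m n
  decide

theorem inner_w (m n : Fin 8) : ⟪w m, w n⟫_ℂ = if m = n then 6 else 0 := by
  have := congrArg (Int.cast : ℤ → ℂ) (amp_gram m n)
  push_cast at this
  simpa [w, PiLp.inner_apply, mul_comm] using this

theorem linearIndependent_w : LinearIndependent ℂ w :=
  linearIndependent_of_ne_zero_of_inner_eq_zero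
    (fun n h => by simpa [h] using inner_w n n) (fun m n hmn => by simp [inner_w, hmn])

def block : Fin 3 → Finset (Fin 8) := ![{0, 1}, {2, 3, 4}, {5, 6, 7}]

def G (a : Fin 3) : Submodule ℂ (EuclideanSpace ℂ (Fin 3 → Fin 2)) := span ℂ (w '' block a)

theorem isOrtho_G {a b : Fin 3} (hab : a ≠ b) : G a ⟂ G b := by
  have hdisj : ∀ a b : Fin 3, a ≠ b → Disjoint (block a) (block b) := by decide
  exact isOrtho_span_image_of_disjoint (fun m n hmn => by simp [inner_w, hmn])
    (Finset.disjoint_coe.mpr (hdisj a b hab))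

theorem finrank_G (a : Fin 3) : finrank ℂ (G a) = (block a).card :=
  linearIndependent_w.finrank_span_image_finset _

theorem G_sup_G_sup_G_eq_top : G 0 ⊔ G 1 ⊔ G 2 = ⊤ := by
  have hblocks : (block 0 : Set (Fin 8)) ∪ block 1 ∪ block 2 = Set.univ :=
    mod_cast (by decide : block 0 ∪ block 1 ∪ block 2 = Finset.univ)
  rw [G, G, G, ← span_union, ← span_union, ← Set.image_union, ← Set.image_union, hblocks,
    Set.image_univ]
  exact linearIndependent_w.span_eq_top_of_card_eq_finrank' (by simp)

theorem coeff_eq_zero_of_splitsOff (a k : Fin 3) (c : Fin 8 → ℂ)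
    (h : SplitsOff k ⇑(∑ n ∈ block a, c n • w n)) : ∀ n ∈ block a, c n = 0 := by
  simp only [SplitsOff, Fin.forall_fin_succ_pi, Fin.forall_fin_zero_pi, Fin.forall_fin_two] at h
  -- The minors generate an ideal containing every `c n ^ 2`; `grind` finds this by a Gröbner
  -- basis computation.
  fin_cases a <;> fin_cases k <;>
    simp [block, w, amp, Finset.sum_insert] at h ⊢ <;> grind

theorem gme_of_mem_G (a : Fin 3) : ∀ ψ ∈ G a, ψ ≠ 0 → GME ψ := by
  intro ψ hψ hψ0
  refine ⟨hψ0, fun S h₁ h₂ hS => hψ0 ?_⟩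
  obtain ⟨c, rfl⟩ := (mem_span_image_finset_iff_exists_fun' ℂ).mp hψ
  obtain ⟨k, hk⟩ := hS.exists_splitsOff h₁ h₂
  exact Finset.sum_eq_zero fun n hn => by rw [coeff_eq_zero_of_splitsOff a k c hk n hn, zero_smul]

end ThreeQubitGES

open ThreeQubitGES in
/-- The three-qubit Hilbert space decomposes into three mutually orthogonal
genuinely entangled subspaces of dimensions `2`, `3` and `3`. -/
theorem three_qubit_GES_decomposition :
    ∃ G₁ G₂ G₃ : Submodule ℂ (EuclideanSpace ℂ (Fin 3 → Fin 2)),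
      Submodule.IsOrtho G₁ G₂ ∧ Submodule.IsOrtho G₁ G₃ ∧ Submodule.IsOrtho G₂ G₃ ∧
      Module.finrank ℂ ↥G₁ = 2 ∧ Module.finrank ℂ ↥G₂ = 3 ∧
      Module.finrank ℂ ↥G₃ = 3 ∧
      (∀ ψ ∈ G₁, ψ ≠ 0 → GME ψ) ∧ (∀ ψ ∈ G₂, ψ ≠ 0 → GME ψ) ∧
      (∀ ψ ∈ G₃, ψ ≠ 0 → GME ψ) ∧
      G₁ ⊔ G₂ ⊔ G₃ = ⊤ :=
  ⟨G 0, G 1, G 2, isOrtho_G (by decide), isOrtho_G (by decide), isOrtho_G (by decide),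
    finrank_G 0, finrank_G 1, finrank_G 2, gme_of_mem_G 0, gme_of_mem_G 1, gme_of_mem_G 2,
    G_sup_G_sup_G_eq_top⟩
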